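/- arXiv:2312.11589 — 5 statements merged into one kernel-verified Lean document; each statement's English description precedes it below -/
import Mathlib

section
/- Let F_y = (T_y, c_y) be an ethical framework on a finite action set A with |A| ≥ 2, and let k ∈ (0, 1). Let s = max over a ∈ A of |wam(F_y, a)|, and set m = 2s + 1. Enumerate A as a_1, …, a_n. Define ft : A → ℝ by ft(a_i) = (1/k)·i·m, and let F = (T_y ∪ {ft}, c) where c(ft) = k and c(t) = (1−k)·c_y(t) for t ∈ T_y. Then for all i, j: wam(F, a_i) ≤ wam(F, a_j) if and only if i ≤ j. That is, the MEC ordering under F coincides exactly with ft's own ordering of the actions. -/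
open Finset

/-! With credence `k`, the fanatical theory contributes exactly `(i + 1) · m` to the weighted
average of `a_i`, while the rescaled old theories contribute `(1 - k) · wam(F_y, a_i) ∈ [-s, s]`.
Consecutive actions are thus separated by `m = 2s + 1`, more than the old theories can ever make up. -/

theorem strictMono_natCast_mul_add {α : Type*} [Preorder α] {φ : α → ℕ} (hφ : StrictMono φ)
    {m : ℝ} {g : α → ℝ} (hg : ∀ a b, g a - g b < m) :
    StrictMono fun a => (φ a : ℝ) * m + g a := by
  intro a b hab
  have hm : 0 < m := by simpa using hg a a
  have hstep : (φ a : ℝ) + 1 ≤ φ b := by exact_mod_cast hφ hab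
  have := hg a b
  nlinarith

theorem mec_follows_fanatical_theory_general
    {ι : Type*} (n : ℕ)
    (T : Finset ι)
    (e : ι → Fin n → ℝ) (cy : ι → ℝ)
    (k : ℝ) (hk0 : 0 < k) (hk1 : k < 1)
    (wamy : Fin n → ℝ) (hwamy : ∀ a, wamy a = ∑ t ∈ T, cy t * e t a)
    (s : ℝ) (hs : IsGreatest (Set.range fun a => |wamy a|) s)
    (m : ℝ) (hm : m = 2 * s + 1)
    (ft : Fin n → ℝ) (hft : ∀ i : Fin n, ft i = (1 / k) * ((i : ℕ) + 1) * m)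
    (wamF : Fin n → ℝ)
    (hwamF : ∀ a, wamF a = k * ft a + ∑ t ∈ T, (1 - k) * cy t * e t a) :
    ∀ i j : Fin n, wamF i ≤ wamF j ↔ i ≤ j := by
  have hwamF_eq : wamF = fun a : Fin n => ((a.val + 1 : ℕ) : ℝ) * m + (1 - k) * wamy a := by
    funext a
    rw [hwamF, hft, hwamy, mul_sum]
    push_cast
    field_simp
  have hosc : ∀ a b, (1 - k) * wamy a - (1 - k) * wamy b < m := by
    intro a b
    have ha := abs_le.mp (hs.2 ⟨a, rfl⟩)
    have hb := abs_le.mp (hs.2 ⟨b, rfl⟩)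
    nlinarith
  have hφ : StrictMono fun a : Fin n => a.val + 1 := fun a b hab => by simpa using hab
  intro i j
  rw [hwamF_eq]
  exact (strictMono_natCast_mul_add hφ hosc).le_iff_le

/-- Core lemma for MEC being Pascalian.  Given any framework
`F_y = (T, c_y)` on actions `a_1, …, a_n` (here `Fin n`), the fanatical theory
`ft(a_i) = (1/k)·i·m` with `m = 2s+1`, `s = max_a |wam(F_y, a)|`, added with
credence `k` (old credences rescaled by `1-k`), makes the MEC ordering of the
extended framework coincide exactly with `ft`'s ordering of the actions. -/
theorem mec_follows_fanatical_theory
    {ι : Type*} (n : ℕ) (hn : 2 ≤ n)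
    (T : Finset ι) (hT : T.Nonempty)
    (e : ι → Fin n → ℝ) (cy : ι → ℝ)
    (hpos : ∀ t ∈ T, 0 < cy t) (hle : ∀ t ∈ T, cy t ≤ 1)
    (hsum : ∑ t ∈ T, cy t = 1)
    (k : ℝ) (hk0 : 0 < k) (hk1 : k < 1)
    (wamy : Fin n → ℝ) (hwamy : ∀ a, wamy a = ∑ t ∈ T, cy t * e t a)
    (s : ℝ) (hs : IsGreatest (Set.range fun a => |wamy a|) s)
    (m : ℝ) (hm : m = 2 * s + 1)
    (ft : Fin n → ℝ) (hft : ∀ i : Fin n, ft i = (1 / k) * ((i : ℕ) + 1) * m)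
    (wamF : Fin n → ℝ)
    (hwamF : ∀ a, wamF a = k * ft a + ∑ t ∈ T, (1 - k) * cy t * e t a) :
    ∀ i j : Fin n, wamF i ≤ wamF j ↔ i ≤ j :=
  mec_follows_fanatical_theory_general n T e cy k hk0 hk1 wamy hwamy s hs m hm ft hft wamF hwamF
end

section
/- The Highest Median social welfare functional is not k-fanatical for any k ∈ (0, 0.5). Specifically: take A = {a, b}, T_y = {t} with c_y(t) = 1, t(a) = 1, t(b) = 0. For any k ∈ (0, 0.5) and any framework F = (T_y ∪ T_d, c) obtained by extending F_y = (T_y, c_y) with a set of theories T_d of total credence at most k (so c(t) ≥ 1 − k > 1/2), the Highest Median ordering of {a, b} under F equals the Highest Median ordering under F_y (namely b ≺ a). Hence T_d cannot be a dominant subset. -/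
open Finset

/-- `v` is a weighted median of action `a`'s evaluations in the framework
`(T, c)`: at most half of the credence lies on evaluations strictly below `v`,
and at most half on evaluations strictly above `v`. -/
def IsWMedian {ι A : Type*} [DecidableEq ι]
    (T : Finset ι) (c : ι → ℝ) (e : ι → A → ℝ) (a : A) (v : ℝ) : Prop :=
  (∑ t ∈ T.filter (fun t => e t a < v), c t) ≤ 1 / 2 ∧
  (∑ t ∈ T.filter (fun t => v < e t a), c t) ≤ 1 / 2

/-!
Since `T_d` carries credence at most `k < 1/2`, the theory `t₀` holds a strict majority of the
credence. A value on either side of a strict majority's evaluation leaves that majority strictly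
on one side of it, so the majority's evaluation is the unique weighted median; hence the medians of
`a` and `b` are `1` and `0` whatever the theories in `T_d` say.
-/

section Majority

variable {ι A : Type*} [DecidableEq ι] {T : Finset ι} {c : ι → ℝ} {e : ι → A → ℝ} {a : A}
  {t₀ : ι}

theorem IsWMedian.eq_of_half_lt {v : ℝ} (hc : ∀ t ∈ T, 0 ≤ c t) (ht₀ : t₀ ∈ T)
    (hmaj : 1 / 2 < c t₀) (h : IsWMedian T c e a v) : v = e t₀ a := by
  have le_sum_filter : ∀ (p : ι → Prop) [DecidablePred p], p t₀ →
      c t₀ ≤ ∑ t ∈ T.filter p, c t := fun p _ hp =>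
    single_le_sum (fun t ht => hc t (mem_of_mem_filter t ht)) (mem_filter.2 ⟨ht₀, hp⟩)
  by_contra hne
  rcases lt_or_gt_of_ne hne with hlt | hgt
  · linarith [h.2, le_sum_filter (fun t => v < e t a) hlt]
  · linarith [h.1, le_sum_filter (fun t => e t a < v) hgt]

theorem isWMedian_of_half_lt (hc : ∀ t ∈ T, 0 ≤ c t) (ht₀ : t₀ ∈ T)
    (hsum : ∑ t ∈ T, c t = 1) (hmaj : 1 / 2 < c t₀) : IsWMedian T c e a (e t₀ a) := by
  have sum_filter_le : ∀ (p : ι → Prop) [DecidablePred p], ¬ p t₀ →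
      ∑ t ∈ T.filter p, c t ≤ 1 / 2 := by
    intro p _ hp
    have hsub : T.filter p ⊆ T.erase t₀ := fun t ht =>
      mem_erase.2 ⟨fun h => hp (h ▸ (mem_filter.1 ht).2), (mem_filter.1 ht).1⟩
    have hrest : ∑ t ∈ T.erase t₀, c t + c t₀ = 1 := by rw [sum_erase_add _ _ ht₀, hsum]
    calc ∑ t ∈ T.filter p, c t ≤ ∑ t ∈ T.erase t₀, c t :=
          sum_le_sum_of_subset_of_nonneg hsub fun t ht _ => hc t (mem_of_mem_erase ht)
      _ ≤ 1 / 2 := by linarith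
  exact ⟨sum_filter_le _ (lt_irrefl _), sum_filter_le _ (lt_irrefl _)⟩

theorem isWMedian_iff_of_half_lt {v : ℝ} (hc : ∀ t ∈ T, 0 ≤ c t) (ht₀ : t₀ ∈ T)
    (hsum : ∑ t ∈ T, c t = 1) (hmaj : 1 / 2 < c t₀) : IsWMedian T c e a v ↔ v = e t₀ a :=
  ⟨IsWMedian.eq_of_half_lt hc ht₀ hmaj, fun h => h ▸ isWMedian_of_half_lt hc ht₀ hsum hmaj⟩

end Majority

theorem highest_median_not_fanatical_general
    {ι A : Type*} [DecidableEq ι]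
    (k : ℝ) (hk : k < 1 / 2)
    (t0 : ι) (Td : Finset ι) (ht0 : t0 ∉ Td)
    (c : ι → ℝ)
    (hpos : ∀ t ∈ insert t0 Td, 0 < c t)
    (hsum : ∑ t ∈ insert t0 Td, c t = 1)
    (hTd : ∑ t ∈ Td, c t ≤ k)
    (a b : A)
    (e : ι → A → ℝ) (hea : e t0 a = 1) (heb : e t0 b = 0) :
    (∀ v, IsWMedian (insert t0 Td) c e a v ↔ v = 1) ∧
    (∀ v, IsWMedian (insert t0 Td) c e b v ↔ v = 0) ∧
    (∀ va vb, IsWMedian (insert t0 Td) c e a va →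
      IsWMedian (insert t0 Td) c e b vb → vb < va) := by
  have hmaj : 1 / 2 < c t0 := by
    rw [sum_insert ht0] at hsum
    linarith
  have median : ∀ x v, IsWMedian (insert t0 Td) c e x v ↔ v = e t0 x := fun _ _ =>
    isWMedian_iff_of_half_lt (fun t ht => (hpos t ht).le) (mem_insert_self t0 Td) hsum hmaj
  refine ⟨fun v => hea ▸ median a v, fun v => heb ▸ median b v, fun va vb hva hvb => ?_⟩
  rw [median, hea] at hva
  rw [median, heb] at hvb
  rw [hva, hvb]
  exact zero_lt_one

/-- Highest Median is not `k`-fanatical for any `k ∈ (0, 0.5)`: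
with `T_y = {t₀}`, `t₀(a) = 1`, `t₀(b) = 0`, extending by any set `T_d` of
theories of total credence at most `k` leaves the weighted medians (hence the
Highest Median ordering `b ≺ a`) unchanged, so `T_d` is not dominant. -/
theorem highest_median_not_fanatical
    {ι A : Type*} [DecidableEq ι]
    (k : ℝ) (hk0 : 0 < k) (hk : k < 1 / 2)
    (t0 : ι) (Td : Finset ι) (ht0 : t0 ∉ Td)
    (c : ι → ℝ)
    (hpos : ∀ t ∈ insert t0 Td, 0 < c t)
    (hsum : ∑ t ∈ insert t0 Td, c t = 1)
    (hTd : ∑ t ∈ Td, c t ≤ k)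
    (a b : A) (hab : a ≠ b)
    (e : ι → A → ℝ) (hea : e t0 a = 1) (heb : e t0 b = 0) :
    (∀ v, IsWMedian (insert t0 Td) c e a v ↔ v = 1) ∧
    (∀ v, IsWMedian (insert t0 Td) c e b v ↔ v = 0) ∧
    (∀ va vb, IsWMedian (insert t0 Td) c e a va →
      IsWMedian (insert t0 Td) c e b vb → vb < va) :=
  highest_median_not_fanatical_general k hk t0 Td ht0 c hpos hsum hTd a b e hea heb
end

section
/- MEC is Pascalian: for every k ∈ (0, 0.5), every ethical framework F_y = (T_y, c_y), and every finite action set A with |A| ≥ 2, there exists a theory ft and an extended framework F = (T_y ∪ {ft}, c) with c(ft) = k and c(t) = (1−k)c_y(t) for t ∈ T_y, such that {ft} is a dominant subset: the MEC ordering under F equals the MEC ordering under the restriction to {ft} (i.e., ft's own ordering), and this ordering differs from the MEC ordering under F_y. -/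
open Finset

/-!
Give the new theory `ft` values `M/k · r`, where `r` ranks the actions injectively by natural
numbers and `M` exceeds every difference of the remaining (rescaled) expected choiceworthiness.
Then the weighted term `k · ft = M · r` jumps by at least `M` between actions of different rank,
which no difference of the remaining terms can compensate, so the MEC ordering is that of `ft`.
Choosing the ranking to put an action `a` strictly above an action `b` with `g a ≤ g b`, where `g`
is the expected choiceworthiness under the old framework, makes `ft`'s ordering differ from `g`'s.
-/

section

variable {A : Type*}

theorem Fintype.exists_injective_nat_lt [Fintype A] {a b : A} (hab : a ≠ b) :
    ∃ r : A → ℕ, Function.Injective r ∧ r b < r a := by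
  classical
  let e := Fintype.equivFin A
  have hne : (e a : ℕ) ≠ e b := fun h => hab (e.injective (Fin.ext h))
  rcases hne.lt_or_gt with hlt | hgt
  · refine ⟨fun x => e (Equiv.swap a b x), ?_, ?_⟩
    · exact fun x y h => (Equiv.swap a b).injective (e.injective (Fin.ext h))
    · simpa using hlt
  · exact ⟨fun x => e x, fun x y h => e.injective (Fin.ext h), hgt⟩

theorem Fintype.exists_forall_sub_lt [Fintype A] (h : A → ℝ) : ∃ M, ∀ a b, h a - h b < M := by
  refine ⟨2 * ∑ x, |h x| + 1, fun a b => ?_⟩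
  have ha : |h a| ≤ ∑ x, |h x| := single_le_sum (fun x _ => abs_nonneg (h x)) (mem_univ a)
  have hb : |h b| ≤ ∑ x, |h x| := single_le_sum (fun x _ => abs_nonneg (h x)) (mem_univ b)
  linarith [le_abs_self (h a), neg_abs_le (h b)]

theorem add_le_add_iff_of_injective {f h : A → ℝ} (hf : Function.Injective f)
    (hlt : ∀ a b, f a < f b → f a + h a < f b + h b) (a b : A) :
    f a + h a ≤ f b + h b ↔ f a ≤ f b := by
  refine ⟨fun hab => not_lt.mp fun hba => (hlt b a hba).not_ge hab, fun hab => ?_⟩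
  rcases hab.eq_or_lt with heq | hlt'
  · rw [hf heq]
  · exact (hlt a b hlt').le

theorem exists_dominating_of_ne [Fintype A] (h : A → ℝ) {k : ℝ} (hk : 0 < k)
    {a b : A} (hab : a ≠ b) :
    ∃ f : A → ℝ, (∀ x y, k * f x + h x ≤ k * f y + h y ↔ f x ≤ f y) ∧ f b < f a := by
  obtain ⟨r, hr, hba⟩ := Fintype.exists_injective_nat_lt hab
  obtain ⟨M, hM⟩ := Fintype.exists_forall_sub_lt h
  have hM0 : 0 < M := by simpa using hM a a
  have hkf : ∀ x, k * (M / k * r x) = M * r x := fun x => by field_simp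
  have hrank : ∀ x y, M * r x < M * r y → M * r x + h x < M * r y + h y := by
    intro x y hxy
    have hr1 : (r x : ℝ) + 1 ≤ r y := by exact_mod_cast (lt_of_mul_lt_mul_left hxy hM0.le)
    nlinarith [hM x y]
  have hinj : Function.Injective fun x => M * (r x : ℝ) :=
    fun x y hxy => hr (by exact_mod_cast mul_left_cancel₀ hM0.ne' hxy)
  refine ⟨fun x => M / k * r x, fun x y => ?_, ?_⟩
  · rw [hkf, hkf, add_le_add_iff_of_injective hinj hrank, ← hkf, ← hkf]
    exact mul_le_mul_iff_right₀ hk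
  · exact mul_lt_mul_of_pos_left (by exact_mod_cast hba) (div_pos hM0 hk)

end

theorem mec_is_pascalian_general
    {ι A : Type*} [Fintype A] (hA : 2 ≤ Fintype.card A)
    (T : Finset ι)
    (e : ι → A → ℝ) (cy : ι → ℝ)
    (k : ℝ) (hk0 : 0 < k) :
    ∃ ft : A → ℝ,
      (∀ a b : A,
        (k * ft a + ∑ t ∈ T, (1 - k) * cy t * e t a) ≤
          (k * ft b + ∑ t ∈ T, (1 - k) * cy t * e t b) ↔ ft a ≤ ft b) ∧
      ¬ (∀ a b : A,
          ft a ≤ ft b ↔ (∑ t ∈ T, cy t * e t a) ≤ (∑ t ∈ T, cy t * e t b)) := by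
  let g : A → ℝ := fun a => ∑ t ∈ T, cy t * e t a
  obtain ⟨x, y, hxy⟩ := Fintype.exists_pair_of_one_lt_card hA
  obtain ⟨a, b, hab, hg⟩ : ∃ a b : A, a ≠ b ∧ g a ≤ g b := by
    rcases le_total (g x) (g y) with h | h
    exacts [⟨x, y, hxy, h⟩, ⟨y, x, hxy.symm, h⟩]
  obtain ⟨ft, hdom, hba⟩ :=
    exists_dominating_of_ne (fun a => ∑ t ∈ T, (1 - k) * cy t * e t a) hk0 hab
  exact ⟨ft, hdom, fun hsame => hba.not_ge ((hsame a b).mpr hg)⟩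

/-- MEC is Pascalian.  For every `k ∈ (0, 0.5)`, every ethical
framework `F_y = (T, c_y)` and every finite action set `A` with `|A| ≥ 2`,
there is a theory `ft` such that in the extended framework (credence `k` for
`ft`, old credences rescaled by `1-k`) the MEC ordering equals `ft`'s own
ordering (i.e. the MEC ordering of the restriction to `{ft}`), and this
ordering differs from the MEC ordering of `F_y`; i.e. `{ft}` is a dominant
subset of total credence `k`. -/
theorem mec_is_pascalian
    {ι A : Type*} [Fintype A] (hA : 2 ≤ Fintype.card A)
    (T : Finset ι) (hT : T.Nonempty)
    (e : ι → A → ℝ) (cy : ι → ℝ)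
    (hpos : ∀ t ∈ T, 0 < cy t) (hle : ∀ t ∈ T, cy t ≤ 1)
    (hsum : ∑ t ∈ T, cy t = 1)
    (k : ℝ) (hk0 : 0 < k) (hk : k < 1 / 2) :
    ∃ ft : A → ℝ,
      (∀ a b : A,
        (k * ft a + ∑ t ∈ T, (1 - k) * cy t * e t a) ≤
          (k * ft b + ∑ t ∈ T, (1 - k) * cy t * e t b) ↔ ft a ≤ ft b) ∧
      ¬ (∀ a b : A,
          ft a ≤ ft b ↔ (∑ t ∈ T, cy t * e t a) ≤ (∑ t ∈ T, cy t * e t b)) :=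
  mec_is_pascalian_general hA T e cy k hk0
end

section
/- Maximin is Pascalian: for every k ∈ (0, 0.5), every ethical framework F_y = (T_y, c_y), and every finite action set A with |A| ≥ 2, there exists a theory ft such that in the framework F = (T_y ∪ {ft}, c) with c(ft) = k, the singleton {ft} is a dominant subset under the Maximin functional: the Maximin ordering under F equals ft's ordering and differs from the Maximin ordering under F_y. -/
open Finset

/-!
Maximin looks only at the worst value of an action, so credences play no role. A new theory
`ft` that values every action below every value of the old theories is, for each action, the
worst theory, and the Maximin ordering of the extended framework is `ft`'s ordering. Making `ft`
rank a Maximin-optimal action `a*` of the old framework strictly last lets it disagree with the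
old ordering as soon as there is a second action.
-/

section Witness

variable {A : Type*} [Fintype A] [DecidableEq A]

noncomputable def lowered (m : A → ℝ) (a₀ : A) : A → ℝ :=
  fun a => if a = a₀ then univ.inf' ⟨a₀, mem_univ a₀⟩ m - 2 else univ.inf' ⟨a₀, mem_univ a₀⟩ m - 1

theorem lowered_lt (m : A → ℝ) (a₀ a : A) : lowered m a₀ a < m a := by
  have hμ : univ.inf' ⟨a₀, mem_univ a₀⟩ m ≤ m a := inf'_le m (mem_univ a)
  unfold lowered
  split_ifs <;> linarith

theorem lowered_self_lt {m : A → ℝ} {a₀ a : A} (ha : a ≠ a₀) :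
    lowered m a₀ a₀ < lowered m a₀ a := by
  simp only [lowered, if_true, if_neg ha]
  linarith

end Witness

theorem exists_forall_lt_and_not_le_iff {A : Type*} [Fintype A] (hA : 2 ≤ Fintype.card A)
    (m : A → ℝ) : ∃ f : A → ℝ, (∀ a, f a < m a) ∧ ¬ ∀ a b, f a ≤ f b ↔ m a ≤ m b := by
  classical
  obtain ⟨a₀, -, ha₀⟩ := exists_max_image univ m (univ_nonempty_iff.mpr
    (Fintype.card_pos_iff.mp (by omega)))
  obtain ⟨b, hb⟩ := Fintype.exists_ne_of_one_lt_card (by omega) a₀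
  refine ⟨lowered m a₀, lowered_lt m a₀, fun h => ?_⟩
  exact (lowered_self_lt hb).not_ge ((h b a₀).mpr (ha₀ b (mem_univ b)))

theorem maximin_is_pascalian_general
    {ι A : Type*} [Fintype A] (hA : 2 ≤ Fintype.card A)
    (T : Finset ι) (hT : T.Nonempty)
    (e : ι → A → ℝ) :
    ∃ ft : A → ℝ,
      (∀ a b : A,
        min (ft a) (T.inf' hT fun t => e t a) ≤ min (ft b) (T.inf' hT fun t => e t b)
          ↔ ft a ≤ ft b) ∧
      ¬ (∀ a b : A,
          ft a ≤ ft b ↔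
            T.inf' hT (fun t => e t a) ≤ T.inf' hT (fun t => e t b)) := by
  obtain ⟨ft, hlt, hne⟩ := exists_forall_lt_and_not_le_iff hA fun a => T.inf' hT fun t => e t a
  refine ⟨ft, fun a b => ?_, hne⟩
  rw [min_eq_left (hlt a).le, min_eq_left (hlt b).le]

/-- Maximin is Pascalian.  For every `k ∈ (0, 0.5)`, every
ethical framework `F_y = (T, c_y)` and every finite action set `A` with
`|A| ≥ 2`, there is a theory `ft` such that in the extended framework
(`ft` with credence `k`, old credences rescaled by `1-k`) the Maximin ordering
equals `ft`'s ordering and differs from the Maximin ordering of `F_y`;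
i.e. `{ft}` is a dominant subset of credence `k`. -/
theorem maximin_is_pascalian
    {ι A : Type*} [Fintype A] (hA : 2 ≤ Fintype.card A)
    (T : Finset ι) (hT : T.Nonempty)
    (e : ι → A → ℝ) (cy : ι → ℝ)
    (hpos : ∀ t ∈ T, 0 < cy t) (hsum : ∑ t ∈ T, cy t = 1)
    (k : ℝ) (hk0 : 0 < k) (hk : k < 1 / 2) :
    ∃ ft : A → ℝ,
      (∀ a b : A,
        min (ft a) (T.inf' hT fun t => e t a) ≤ min (ft b) (T.inf' hT fun t => e t b)
          ↔ ft a ≤ ft b) ∧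
      ¬ (∀ a b : A,
          ft a ≤ ft b ↔
            T.inf' hT (fun t => e t a) ≤ T.inf' hT (fun t => e t b)) :=
  maximin_is_pascalian_general hA T hT e
end

section
/- For k ∈ (0, 0.5) and k' ∈ (k, 0.5), the k-trimmed Highest Mean is k'-fanatical: in a two-theory framework F' = ({t_x, ft}, c') with c'(ft) = k' > k and c'(t_x) = 1 − k', neither theory is ever trimmed by the k-trimming procedure (since both credences exceed k... in the case c'(t_x) = 1−k' > k and c'(ft) = k' > k), so for every action a, the k-trimmed weighted mean equals the untrimmed weighted mean k'·ft(a) + (1−k')·t_x(a); hence k-thm on F' coincides with MEC on F'. -/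
open Finset

/-- Bottom-`k` trimmed set (maximal initial segment of the sorted order `σ`
with cumulative credence at most `k`). -/
noncomputable def bottomSet (N : ℕ) (k : ℝ) (c : Fin N → ℝ) (σ : Equiv.Perm (Fin N)) :
    Finset (Fin N) :=
  (Finset.univ.filter fun i => (∑ j ∈ Finset.Iic i, c (σ j)) ≤ k).image σ

/-- Top-`k` trimmed set (maximal final segment of total credence at most `k`). -/
noncomputable def topSet (N : ℕ) (k : ℝ) (c : Fin N → ℝ) (σ : Equiv.Perm (Fin N)) :
    Finset (Fin N) :=
  (Finset.univ.filter fun i => (∑ j ∈ Finset.Ici i, c (σ j)) ≤ k).image σ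

/-- The `k`-trimmed weighted mean of action `a`. -/
noncomputable def tmean {A : Type*} (N : ℕ) (k : ℝ) (c : Fin N → ℝ)
    (σ : Equiv.Perm (Fin N)) (e : Fin N → A → ℝ) (a : A) : ℝ :=
  ∑ t ∈ Finset.univ \ (bottomSet N k c σ ∪ topSet N k c σ), c t * e t a

section Trimming

variable {N : ℕ} {k : ℝ} {c : Fin N → ℝ}

theorem notMem_bottomSet_of_lt (hk : 0 ≤ k) (hc : ∀ i, k < c i) (σ : Equiv.Perm (Fin N))
    (t : Fin N) : t ∉ bottomSet N k c σ := by
  simp only [bottomSet, mem_image, mem_filter, mem_univ, true_and]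
  rintro ⟨i, hi, -⟩
  have hsingle : c (σ i) ≤ ∑ j ∈ Iic i, c (σ j) :=
    single_le_sum (fun j _ => hk.trans (hc (σ j)).le) (mem_Iic.2 le_rfl)
  linarith [hc (σ i)]

theorem notMem_topSet_of_lt (hk : 0 ≤ k) (hc : ∀ i, k < c i) (σ : Equiv.Perm (Fin N))
    (t : Fin N) : t ∉ topSet N k c σ := by
  simp only [topSet, mem_image, mem_filter, mem_univ, true_and]
  rintro ⟨i, hi, -⟩
  have hsingle : c (σ i) ≤ ∑ j ∈ Ici i, c (σ j) :=
    single_le_sum (fun j _ => hk.trans (hc (σ j)).le) (mem_Ici.2 le_rfl)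
  linarith [hc (σ i)]

theorem tmean_eq_sum_of_lt {A : Type*} (hk : 0 ≤ k) (hc : ∀ i, k < c i)
    (σ : Equiv.Perm (Fin N)) (e : Fin N → A → ℝ) (a : A) :
    tmean N k c σ e a = ∑ t, c t * e t a := by
  have hnone : univ \ (bottomSet N k c σ ∪ topSet N k c σ) = univ := by
    refine sdiff_eq_self_of_disjoint (disjoint_left.2 fun t _ ht => ?_)
    rcases mem_union.1 ht with h | h
    · exact notMem_bottomSet_of_lt hk hc σ t h
    · exact notMem_topSet_of_lt hk hc σ t h
  rw [tmean, hnone]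

end Trimming

theorem kthm_eq_mec_on_two_theory_framework_general
    {A : Type*}
    (e : Fin 2 → A → ℝ) (c : Fin 2 → ℝ)
    (k k' : ℝ) (hk0 : 0 < k) (hkk' : k < k') (hk' : k' < 1 / 2)
    (hc0 : c 0 = 1 - k') (hc1 : c 1 = k')
    (σ : A → Equiv.Perm (Fin 2)) :
    (∀ a : A, ∀ t : Fin 2,
      t ∉ bottomSet 2 k c (σ a) ∧ t ∉ topSet 2 k c (σ a)) ∧
    (∀ a : A, tmean 2 k c (σ a) e a = k' * e 1 a + (1 - k') * e 0 a) ∧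
    (∀ a b : A,
      tmean 2 k c (σ a) e a ≤ tmean 2 k c (σ b) e b ↔
        (∑ t, c t * e t a) ≤ (∑ t, c t * e t b)) := by
  have hck : ∀ i : Fin 2, k < c i :=
    Fin.forall_fin_two.2 ⟨by rw [hc0]; linarith, by rw [hc1]; linarith⟩
  have hmean : ∀ a, tmean 2 k c (σ a) e a = ∑ t, c t * e t a :=
    fun a => tmean_eq_sum_of_lt hk0.le hck (σ a) e a
  refine ⟨fun a t => ⟨notMem_bottomSet_of_lt hk0.le hck (σ a) t,
      notMem_topSet_of_lt hk0.le hck (σ a) t⟩, fun a => ?_, fun a b => by rw [hmean, hmean]⟩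
  rw [hmean, Fin.sum_univ_two, hc0, hc1]
  ring

/-- in the two-theory framework `F' = ({t_x, ft}, c')` with
`c'(t_x) = 1 - k' > k` and `c'(ft) = k' > k` (where `k < k' < 0.5`), neither
theory is trimmed by the `k`-trimming procedure, so for every action the
`k`-trimmed mean equals the untrimmed weighted mean
`k'·ft(a) + (1-k')·t_x(a)`; hence `k`-thm coincides with MEC on `F'`.
(Theory `0` is `t_x`, theory `1` is `ft`.) -/
theorem kthm_eq_mec_on_two_theory_framework
    {A : Type*}
    (e : Fin 2 → A → ℝ) (c : Fin 2 → ℝ)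
    (k k' : ℝ) (hk0 : 0 < k) (hkk' : k < k') (hk' : k' < 1 / 2)
    (hc0 : c 0 = 1 - k') (hc1 : c 1 = k')
    (σ : A → Equiv.Perm (Fin 2))
    (hsorted : ∀ a' : A, Monotone fun i => e (σ a' i) a') :
    (∀ a : A, ∀ t : Fin 2,
      t ∉ bottomSet 2 k c (σ a) ∧ t ∉ topSet 2 k c (σ a)) ∧
    (∀ a : A, tmean 2 k c (σ a) e a = k' * e 1 a + (1 - k') * e 0 a) ∧
    (∀ a b : A,
      tmean 2 k c (σ a) e a ≤ tmean 2 k c (σ b) e b ↔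
        (∑ t, c t * e t a) ≤ (∑ t, c t * e t b)) :=
  kthm_eq_mec_on_two_theory_framework_general e c k k' hk0 hkk' hk' hc0 hc1 σ
end
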